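/- arXiv:1210.2260 — 6 statements merged into one kernel-verified Lean document; each statement's English description precedes it below -/
import Mathlib

section
/- Let A be a set and let a, b : A → A → A be conservative binary operations. Define c : A → A → A by c x y = a (b x y) (b y x). Then c is conservative, Com(c) = Com(a) ∪ Com(b), and moreover for every two-element subset B ∈ Com(b), the restriction of c to B equals the restriction of b to B. -/
/-- A binary operation is conservative if it always returns one of its
arguments. -/
def Conservative2 {A : Type*} (f : A → A → A) : Prop :=
  ∀ x y : A, f x y = x ∨ f x y = y

/-- `Com f` is the set of two-element subsets `{a, b}` of `A` on which `f` is
commutative. -/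
def Com {A : Type*} (f : A → A → A) : Set (Set A) :=
  {B | ∃ a b : A, a ≠ b ∧ B = ({a, b} : Set A) ∧ f a b = f b a}

/-!
Where `b` commutes on `{x, y}`, the two arguments of `a` in `c x y = a (b x y) (b y x)`
coincide, so `c x y = b x y` by idempotency of the conservative `a`. Where `b` does not
commute on `{x, y}`, conservativity forces `(b x y, b y x)` to be `(x, y)` or `(y, x)`, so
`c` restricted to `{x, y}` is `a` or its transpose, and commutes exactly when `a` does.
-/

namespace Conservative2

variable {A : Type*} {f : A → A → A}

theorem apply_self (hf : Conservative2 f) (x : A) : f x x = x :=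
  (hf x x).elim id id

theorem eq_pair_or_eq_swap_of_ne (hf : Conservative2 f) {x y : A} (h : f x y ≠ f y x) :
    (f x y = x ∧ f y x = y) ∨ (f x y = y ∧ f y x = x) := by
  rcases hf x y with hxy | hxy <;> rcases hf y x with hyx | hyx <;> simp_all

theorem superpose {a b : A → A → A} (ha : Conservative2 a) (hb : Conservative2 b) :
    Conservative2 fun x y => a (b x y) (b y x) := by
  intro x y
  show a (b x y) (b y x) = x ∨ a (b x y) (b y x) = y
  rcases ha (b x y) (b y x) with h | h <;> rw [h]
  · exact hb x y
  · exact (hb y x).symm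

end Conservative2

section Superposition

variable {A : Type*} {a b : A → A → A}

theorem superpose_eq_of_comm (ha : Conservative2 a) {x y : A} (h : b x y = b y x) :
    a (b x y) (b y x) = b x y := by
  rw [← h, ha.apply_self]

theorem superpose_comm_iff (hb : Conservative2 b) (x y : A) :
    a (b x y) (b y x) = a (b y x) (b x y) ↔ a x y = a y x ∨ b x y = b y x := by
  by_cases hbc : b x y = b y x
  · simp only [hbc, or_true]
  · rcases hb.eq_pair_or_eq_swap_of_ne hbc with ⟨hxy, hyx⟩ | ⟨hxy, hyx⟩
    all_goals
      simp only [hxy, hyx, eq_comm (a := a y x)]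
      refine (or_iff_left_of_imp ?_).symm
      rintro rfl
      rfl

end Superposition

theorem Com_eq_union_of_comm_iff {A : Type*} {f g h : A → A → A}
    (hfgh : ∀ x y, f x y = f y x ↔ g x y = g y x ∨ h x y = h y x) :
    Com f = Com g ∪ Com h := by
  ext B
  simp only [Com, Set.mem_union, Set.mem_ofPred_eq, hfgh, and_or_left, exists_or]

theorem comm_of_mem_Com {A : Type*} {f : A → A → A} {B : Set A} (hB : B ∈ Com f)
    {x y : A} (hx : x ∈ B) (hy : y ∈ B) : f x y = f y x := by
  obtain ⟨p, q, -, rfl, hpq⟩ := hB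
  rcases hx with rfl | rfl <;> rcases hy with rfl | rfl <;>
    first | rfl | exact hpq | exact hpq.symm

/-- For conservative binary operations `a, b`, the superposition
`c x y = a (b x y) (b y x)` is conservative, `Com c = Com a ∪ Com b`, and `c`
agrees with `b` on every two-element set in `Com b`. -/
theorem com_superposition {A : Type*} (a b : A → A → A)
    (ha : Conservative2 a) (hb : Conservative2 b)
    (c : A → A → A) (hc : c = fun x y => a (b x y) (b y x)) :
    Conservative2 c ∧ Com c = Com a ∪ Com b ∧
    ∀ B ∈ Com b, ∀ x ∈ B, ∀ y ∈ B, c x y = b x y := by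
  subst hc
  refine ⟨ha.superpose hb, Com_eq_union_of_comm_iff (superpose_comm_iff hb), ?_⟩
  intro B hB x hx y hy
  exact superpose_eq_of_comm ha (comm_of_mem_Com hB hx hy)
end

section
/- Let A be a finite set and let F be a nonempty set of conservative binary operations on A that is closed under the superposition (a, b) ↦ ((x, y) ↦ a (b x y) (b y x)). Then there exists f_max ∈ F such that Com(f_max) = ⋃_{f ∈ F} Com(f); in particular, Com(f) ⊆ Com(f_max) for every f ∈ F. -/
def superpos {A : Type*} (a b : A → A → A) : A → A → A :=
  fun x y => a (b x y) (b y x)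

lemma com_subset_com_superpos_left {A : Type*} (a : A → A → A) {b : A → A → A}
    (hb : Conservative2 b) : Com a ⊆ Com (superpos a b) := by
  rintro _ ⟨x, y, hxy, rfl, hcomm⟩
  refine ⟨x, y, hxy, rfl, ?_⟩
  -- `b x y, b y x ∈ {x, y}`, so `a` is applied to `(x, y)`, `(y, x)` or a diagonal pair.
  rcases hb x y with h | h <;> rcases hb y x with h' | h' <;>
    simp only [superpos, h, h', hcomm]

lemma com_subset_com_superpos_right {A : Type*} (a b : A → A → A) :
    Com b ⊆ Com (superpos a b) := by
  rintro _ ⟨x, y, hxy, rfl, hcomm⟩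
  exact ⟨x, y, hxy, rfl, by simp only [superpos, hcomm]⟩

/-- In a nonempty family of conservative binary operations on a finite set
closed under the superposition `(a, b) ↦ (x, y) ↦ a (b x y) (b y x)`, some
member `f_max` has `Com (f_max) = ⋃_{f ∈ F} Com f`; in particular `Com f ⊆
Com f_max` for every `f ∈ F`. -/
theorem exists_fmax {A : Type*} [Fintype A] (F : Set (A → A → A))
    (hcons : ∀ f ∈ F, Conservative2 f) (hne : F.Nonempty)
    (hclosed : ∀ a ∈ F, ∀ b ∈ F, (fun x y => a (b x y) (b y x)) ∈ F) :
    ∃ fmax ∈ F, Com fmax = (⋃ f ∈ F, Com f) ∧ ∀ f ∈ F, Com f ⊆ Com fmax := by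
  obtain ⟨fmax, hfmax, hmax⟩ := Set.Finite.exists_maximalFor' Com F (Set.toFinite _) hne
  have hle : ∀ f ∈ F, Com f ⊆ Com fmax := fun f hf =>
    (com_subset_com_superpos_right fmax f).trans
      (hmax (hclosed fmax hfmax f hf) (com_subset_com_superpos_left fmax (hcons f hf)))
  exact ⟨fmax, hfmax,
    (Set.subset_biUnion_of_mem (u := Com) hfmax).antisymm (Set.iUnion₂_subset hle), hle⟩
end

section
/- Let A be a set and let F be a set of conservative binary operations on A closed under superposition: for all f, g, h ∈ F, the operation (x, y) ↦ f (g x y) (h x y) belongs to F. Let (a₁, b₁), …, (a_n, b_n) be pairs of elements of A with a_i ≠ b_i, and suppose that for every pair of indices i, j there exists f ∈ F with ↓[a_i,b_i] f and ↓[a_j,b_j] f. Then there exists φ ∈ F such that ↓[a_i,b_i] φ holds for all i = 1, …, n. -/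
/-- `↓[a,b] f`: the operation `f` returns `b` on the pair `{a, b}`. -/
def DownOp {A : Type*} (a b : A) (f : A → A → A) : Prop :=
  f a b = b ∧ f b a = b

lemma conserv_diag {A : Type*} {h : A → A → A} (hh : Conservative2 h) (x : A) :
    h x x = x := by rcases hh x x with h' | h' <;> exact h'

/-- Combination lemma, case: both inner ops are down. -/
lemma down_comb1 {A : Type*} {a b : A} {h g k : A → A → A}
    (hh : Conservative2 h) (hg : DownOp a b g) (hk : DownOp a b k) :
    DownOp a b (fun x y => h (g x y) (k x y)) := by
  constructor <;> simp only [hg.1, hg.2, hk.1, hk.2, conserv_diag hh]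

/-- Case: outer and first inner are down, second inner conservative. -/
lemma down_comb2 {A : Type*} {a b : A} {h g k : A → A → A}
    (hh : Conservative2 h) (hhd : DownOp a b h) (hg : DownOp a b g)
    (hk : Conservative2 k) :
    DownOp a b (fun x y => h (g x y) (k x y)) := by
  constructor
  · simp only [hg.1]
    rcases hk a b with h' | h' <;> simp [h', hhd.2, conserv_diag hh]
  · simp only [hg.2]
    rcases hk b a with h' | h' <;> simp [h', hhd.2, conserv_diag hh]

/-- Case: outer and second inner are down, first inner conservative. -/
lemma down_comb3 {A : Type*} {a b : A} {h g k : A → A → A}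
    (hh : Conservative2 h) (hhd : DownOp a b h) (hg : Conservative2 g)
    (hk : DownOp a b k) :
    DownOp a b (fun x y => h (g x y) (k x y)) := by
  constructor
  · simp only [hk.1]
    rcases hg a b with h' | h' <;> simp [h', hhd.1, conserv_diag hh]
  · simp only [hk.2]
    rcases hg b a with h' | h' <;> simp [h', hhd.1, conserv_diag hh]

/-- If for each two of the pairs `(a_i, b_i)` some member of `F` satisfies `↓`
on both, then some member of `F` satisfies `↓` on all the pairs
simultaneously. -/
theorem exists_common_down {A : Type*} (F : Set (A → A → A))
    (hcons : ∀ f ∈ F, Conservative2 f)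
    (hclosed : ∀ f ∈ F, ∀ g ∈ F, ∀ h ∈ F, (fun x y => f (g x y) (h x y)) ∈ F)
    (n : ℕ) (hn : 0 < n) (a b : Fin n → A) (hab : ∀ i, a i ≠ b i)
    (hpair : ∀ i j : Fin n, ∃ f ∈ F, DownOp (a i) (b i) f ∧ DownOp (a j) (b j) f) :
    ∃ φ ∈ F, ∀ i : Fin n, DownOp (a i) (b i) φ := by
  -- main claim by induction on finsets of indices
  have main : ∀ s : Finset (Fin n), ∃ φ ∈ F, ∀ i ∈ s, DownOp (a i) (b i) φ := by
    intro s
    induction s using Finset.induction_on with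
    | empty =>
      obtain ⟨f, hfF, _⟩ := hpair ⟨0, hn⟩ ⟨0, hn⟩
      exact ⟨f, hfF, fun i hi => by simp at hi⟩
    | @insert j s hjs ih =>
      obtain ⟨φ, hφF, hφ⟩ := ih
      -- inner induction: find ψ down on j and on all of t ⊆ s
      have inner : ∀ t : Finset (Fin n), t ⊆ s →
          ∃ ψ ∈ F, DownOp (a j) (b j) ψ ∧ ∀ i ∈ t, DownOp (a i) (b i) ψ := by
        intro t
        induction t using Finset.induction_on with
        | empty =>
          intro _
          obtain ⟨f, hfF, hf, _⟩ := hpair j j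
          exact ⟨f, hfF, hf, fun i hi => by simp at hi⟩
        | @insert i t hit ih2 =>
          intro hsub
          have his : i ∈ s := hsub (Finset.mem_insert_self i t)
          have hts : t ⊆ s := fun x hx => hsub (Finset.mem_insert_of_mem hx)
          obtain ⟨ψ, hψF, hψj, hψt⟩ := ih2 hts
          obtain ⟨h, hhF, hhi, hhj⟩ := hpair i j
          refine ⟨fun x y => h (ψ x y) (φ x y), hclosed h hhF ψ hψF φ hφF, ?_, ?_⟩
          · exact down_comb2 (hcons h hhF) hhj hψj (hcons φ hφF)
          · intro i' hi'
            rcases Finset.mem_insert.mp hi' with rfl | hi't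
            · exact down_comb3 (hcons h hhF) hhi (hcons ψ hψF) (hφ i' his)
            · exact down_comb1 (hcons h hhF) (hψt i' hi't) (hφ i' (hts hi't))
      obtain ⟨ψ, hψF, hψj, hψs⟩ := inner s (le_refl s)
      refine ⟨ψ, hψF, fun i hi => ?_⟩
      rcases Finset.mem_insert.mp hi with rfl | his
      · exact hψj
      · exact hψs i his
  obtain ⟨φ, hφF, hφ⟩ := main Finset.univ
  exact ⟨φ, hφF, fun i => hφ i (Finset.mem_univ i)⟩
end

section
/- Let A be a finite set, R a finite set of functions A → ℕ such that UG(R) is complete, and F a set of conservative binary operations on A containing both projections and closed under superposition: for all f, g, h ∈ F, (x, y) ↦ f (g x y) (h x y) ∈ F. Let f_max ∈ F satisfy Com(f) ⊆ Com(f_max) for all f ∈ F. Let M be the set of two-element subsets {a, b} of A such that F contains two binary operations whose restrictions to {a, b} are both commutative and distinct, and let M° = {(a, b) : {a, b} ∈ M}. Assume: (i) there is a partition of M° ∩ E(R) into two sets M₁, M₂ such that for any two pairs (a, b), (c, d) lying in the same part there exists f ∈ F with ↓[a,b] f and ↓[c,d] f (i.e., the graph T with vertex set M° ∩ E(R) and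 edges between pairs admitting no common ↓-witness is bipartite); (ii) every two-element set {a, b} ∈ Com(f_max) with both (a, b) ∈ E(R) and (b, a) ∈ E(R) belongs to M; (iii) for every (a, b) ∈ E(R) with (b, a) ∉ E(R) and {a, b} ∈ Com(f_max) \ M, there exists f ∈ F with ↓[a,b] f. Then there exist φ, ψ ∈ F forming a weak tournament pair on Com°(f_max) ∩ E(R), where Com°(f_max) = {(a, b) : {a, b} ∈ Com(f_max)}. -/
/-- `↑[a,b] f`: the operation `f` returns `a` on the pair `{a, b}`. -/
def UpOp {A : Type*} (a b : A) (f : A → A → A) : Prop :=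
  f a b = a ∧ f b a = a

/-- The edge set of the preference graph `G(R)`:
`E(R) = {(a, b) | ∃ r ∈ R, r a > r b}`. -/
def ER {A : Type*} (R : Set (A → ℕ)) : Set (A × A) :=
  {p | ∃ r ∈ R, r p.2 < r p.1}

/-- `M`: the set of two-element sets `{a, b}` such that `F` contains two binary
operations whose restrictions to `{a, b}` are commutative and distinct. -/
def Mset {A : Type*} (F : Set (A → A → A)) : Set (Set A) :=
  {B | ∃ a b : A, a ≠ b ∧ B = ({a, b} : Set A) ∧
    ∃ f ∈ F, ∃ g ∈ F, f a b = f b a ∧ g a b = g b a ∧ f a b ≠ g a b}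

/-- `(φ, ψ)` is a weak tournament pair on `O ⊆ A × A`. -/
def WeakTournamentPair {A : Type*} (O : Set (A × A)) (φ ψ : A → A → A) : Prop :=
  (∀ a b : A, (a, b) ∈ O → (b, a) ∈ O →
      (DownOp a b φ ∧ UpOp a b ψ) ∨ (UpOp a b φ ∧ DownOp a b ψ)) ∧
  (∀ a b : A, (a, b) ∈ O → (b, a) ∉ O →
      (DownOp a b φ ∧ UpOp a b ψ) ∨ (UpOp a b φ ∧ DownOp a b ψ) ∨
        (DownOp a b φ ∧ DownOp a b ψ)) ∧
  (∀ a b : A, a ≠ b → (a, b) ∉ O → (b, a) ∉ O →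
      ∀ x ∈ ({a, b} : Set A), ∀ y ∈ ({a, b} : Set A), φ x y = x ∧ ψ x y = y)

section Aux

variable {A : Type*}

theorem cons_diag {f : A → A → A} (hf : Conservative2 f) (x : A) : f x x = x := by
  rcases hf x x with h | h <;> exact h

/-- `f` on commutative pairs, first projection elsewhere. -/
def hatf (f : A → A → A) : A → A → A := fun x y => f (f x y) x

/-- `f` on commutative pairs, second projection elsewhere. -/
def tilf (f : A → A → A) : A → A → A := fun x y => f y (f x y)

/-- superposition `f (g x y) (g y x)`. -/
def Dop (f g : A → A → A) : A → A → A := fun x y => f (g x y) (g y x)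

def stepA (f g : A → A → A) : A → A → A := hatf (Dop f g)

def stepB (f g : A → A → A) : A → A → A := tilf (Dop f g)

theorem Dop_cons {f g : A → A → A} (hf : Conservative2 f) (hg : Conservative2 g) :
    Conservative2 (Dop f g) := by
  intro x y
  show f (g x y) (g y x) = x ∨ f (g x y) (g y x) = y
  rcases hf (g x y) (g y x) with h | h <;> rw [h]
  · exact hg x y
  · rcases hg y x with h2 | h2 <;> rw [h2]
    · right; rfl
    · left; rfl

theorem hat_comm {f : A → A → A} (hf : Conservative2 f) {a b : A} (h : f a b = f b a) :
    hatf f a b = f a b ∧ hatf f b a = f a b := by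
  rcases hf a b with h1 | h1
  · have h2 : f b a = a := h.symm.trans h1
    constructor
    · show f (f a b) a = f a b
      rw [h1]; exact cons_diag hf a
    · show f (f b a) b = f a b
      rw [h2]
  · have h2 : f b a = b := h.symm.trans h1
    constructor
    · show f (f a b) a = f a b
      rw [h1]; exact h2
    · show f (f b a) b = f a b
      rw [h2, h1]; exact cons_diag hf b

theorem hat_noncomm {f : A → A → A} (hf : Conservative2 f) {a b : A} (h : f a b ≠ f b a) :
    hatf f a b = a ∧ hatf f b a = b := by
  rcases hf a b with h1 | h1 <;> rcases hf b a with h2 | h2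
  · -- f a b = a, f b a = b
    constructor
    · show f (f a b) a = a; rw [h1]; exact cons_diag hf a
    · show f (f b a) b = b; rw [h2]; exact cons_diag hf b
  · exact absurd (h1.trans h2.symm) h
  · exact absurd (h1.trans h2.symm) h
  · -- f a b = b, f b a = a
    constructor
    · show f (f a b) a = a; rw [h1]; exact h2
    · show f (f b a) b = b; rw [h2]; exact h1

theorem til_comm {f : A → A → A} (hf : Conservative2 f) {a b : A} (h : f a b = f b a) :
    tilf f a b = f a b ∧ tilf f b a = f a b := by
  rcases hf a b with h1 | h1
  · have h2 : f b a = a := h.symm.trans h1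
    constructor
    · show f b (f a b) = f a b
      rw [h1]; exact h2
    · show f a (f b a) = f a b
      rw [h2, h1]; exact cons_diag hf a
  · have h2 : f b a = b := h.symm.trans h1
    constructor
    · show f b (f a b) = f a b
      rw [h1]; exact cons_diag hf b
    · show f a (f b a) = f a b
      rw [h2]

theorem til_noncomm {f : A → A → A} (hf : Conservative2 f) {a b : A} (h : f a b ≠ f b a) :
    tilf f a b = b ∧ tilf f b a = a := by
  rcases hf a b with h1 | h1 <;> rcases hf b a with h2 | h2
  · -- f a b = a, f b a = b
    constructor
    · show f b (f a b) = b; rw [h1]; exact h2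
    · show f a (f b a) = a; rw [h2]; exact h1
  · exact absurd (h1.trans h2.symm) h
  · exact absurd (h1.trans h2.symm) h
  · -- f a b = b, f b a = a
    constructor
    · show f b (f a b) = b; rw [h1]; exact cons_diag hf b
    · show f a (f b a) = a; rw [h2]; exact cons_diag hf a

theorem Dop_comm {f g : A → A → A} (hf : Conservative2 f) {a b : A} (h : g a b = g b a) :
    Dop f g a b = g a b ∧ Dop f g b a = g a b := by
  constructor
  · show f (g a b) (g b a) = g a b
    rw [← h]; exact cons_diag hf _
  · show f (g b a) (g a b) = g a b
    rw [h]; exact cons_diag hf _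

theorem Dop_noncomm {f g : A → A → A} (hg : Conservative2 g) {a b : A} (h : g a b ≠ g b a) :
    (Dop f g a b = f a b ∧ Dop f g b a = f b a) ∨
      (Dop f g a b = f b a ∧ Dop f g b a = f a b) := by
  rcases hg a b with h1 | h1 <;> rcases hg b a with h2 | h2
  · left
    constructor
    · show f (g a b) (g b a) = f a b; rw [h1, h2]
    · show f (g b a) (g a b) = f b a; rw [h1, h2]
  · exact absurd (h1.trans h2.symm) h
  · exact absurd (h1.trans h2.symm) h
  · right
    constructor
    · show f (g a b) (g b a) = f b a; rw [h1, h2]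
    · show f (g b a) (g a b) = f a b; rw [h1, h2]

theorem stepA_comm_g {f g : A → A → A} (hf : Conservative2 f) (hg : Conservative2 g)
    {a b : A} (h : g a b = g b a) :
    stepA f g a b = g a b ∧ stepA f g b a = g a b := by
  have hD := Dop_comm (f := f) hf h
  have hh := hat_comm (Dop_cons hf hg) (hD.1.trans hD.2.symm)
  exact ⟨hh.1.trans hD.1, hh.2.trans hD.1⟩

theorem stepA_noncomm_g {f g : A → A → A} (hf : Conservative2 f) (hg : Conservative2 g)
    {a b : A} (hgn : g a b ≠ g b a) (hfc : f a b = f b a) :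
    stepA f g a b = f a b ∧ stepA f g b a = f a b := by
  have hDc : Dop f g a b = f a b ∧ Dop f g b a = f a b := by
    rcases Dop_noncomm (f := f) hg hgn with ⟨e1, e2⟩ | ⟨e1, e2⟩
    · exact ⟨e1, e2.trans hfc.symm⟩
    · exact ⟨e1.trans hfc.symm, e2⟩
  have hh := hat_comm (Dop_cons hf hg) (hDc.1.trans hDc.2.symm)
  exact ⟨hh.1.trans hDc.1, hh.2.trans hDc.1⟩

theorem stepA_noncomm2 {f g : A → A → A} (hf : Conservative2 f) (hg : Conservative2 g)
    {a b : A} (hgn : g a b ≠ g b a) (hfn : f a b ≠ f b a) :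
    stepA f g a b = a ∧ stepA f g b a = b := by
  have hDn : Dop f g a b ≠ Dop f g b a := by
    rcases Dop_noncomm (f := f) hg hgn with ⟨e1, e2⟩ | ⟨e1, e2⟩ <;> rw [e1, e2]
    · exact hfn
    · exact fun hh => hfn hh.symm
  exact hat_noncomm (Dop_cons hf hg) hDn

theorem stepB_comm_g {f g : A → A → A} (hf : Conservative2 f) (hg : Conservative2 g)
    {a b : A} (h : g a b = g b a) :
    stepB f g a b = g a b ∧ stepB f g b a = g a b := by
  have hD := Dop_comm (f := f) hf h
  have hh := til_comm (Dop_cons hf hg) (hD.1.trans hD.2.symm)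
  exact ⟨hh.1.trans hD.1, hh.2.trans hD.1⟩

theorem stepB_noncomm_g {f g : A → A → A} (hf : Conservative2 f) (hg : Conservative2 g)
    {a b : A} (hgn : g a b ≠ g b a) (hfc : f a b = f b a) :
    stepB f g a b = f a b ∧ stepB f g b a = f a b := by
  have hDc : Dop f g a b = f a b ∧ Dop f g b a = f a b := by
    rcases Dop_noncomm (f := f) hg hgn with ⟨e1, e2⟩ | ⟨e1, e2⟩
    · exact ⟨e1, e2.trans hfc.symm⟩
    · exact ⟨e1.trans hfc.symm, e2⟩
  have hh := til_comm (Dop_cons hf hg) (hDc.1.trans hDc.2.symm)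
  exact ⟨hh.1.trans hDc.1, hh.2.trans hDc.1⟩

theorem stepB_noncomm2 {f g : A → A → A} (hf : Conservative2 f) (hg : Conservative2 g)
    {a b : A} (hgn : g a b ≠ g b a) (hfn : f a b ≠ f b a) :
    stepB f g a b = b ∧ stepB f g b a = a := by
  have hDn : Dop f g a b ≠ Dop f g b a := by
    rcases Dop_noncomm (f := f) hg hgn with ⟨e1, e2⟩ | ⟨e1, e2⟩ <;> rw [e1, e2]
    · exact hfn
    · exact fun hh => hfn hh.symm
  exact til_noncomm (Dop_cons hf hg) hDn

theorem com_spec {f : A → A → A} {a b : A} (hab : a ≠ b)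
    (h : ({a, b} : Set A) ∈ Com f) : f a b = f b a := by
  obtain ⟨c, d, _, hset, hcomm⟩ := h
  rcases Set.pair_eq_pair_iff.mp hset with ⟨rfl, rfl⟩ | ⟨rfl, rfl⟩
  · exact hcomm
  · exact hcomm.symm

/-- Pairwise joint down-witnesses give a global down-witness. -/
theorem glob_witness {A : Type*} (F : Set (A → A → A))
    (hcons : ∀ f ∈ F, Conservative2 f)
    (hproj1 : (fun (x : A) (_ : A) => x) ∈ F)
    (hclosed : ∀ f ∈ F, ∀ g ∈ F, ∀ h ∈ F, (fun x y => f (g x y) (h x y)) ∈ F) :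
    ∀ (n : ℕ) (S : Finset (A × A)), S.card ≤ n →
      (∀ p ∈ S, ∀ q ∈ S, ∃ f ∈ F, DownOp p.1 p.2 f ∧ DownOp q.1 q.2 f) →
      ∃ w ∈ F, ∀ p ∈ S, DownOp p.1 p.2 w := by
  classical
  intro n
  induction n with
  | zero =>
    intro S hcard _
    refine ⟨_, hproj1, ?_⟩
    intro p hp
    have : S = ∅ := Finset.card_eq_zero.mp (Nat.le_zero.mp hcard)
    simp [this] at hp
  | succ n ih =>
    intro S hcard hpair
    by_cases hle : S.card ≤ 1
    · rcases S.eq_empty_or_nonempty with rfl | ⟨p, hp⟩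
      · exact ⟨_, hproj1, by simp⟩
      · obtain ⟨w, hwF, hw, _⟩ := hpair p hp p hp
        refine ⟨w, hwF, ?_⟩
        intro q hq
        have := Finset.card_le_one.mp hle q hq p hp
        rw [this]; exact hw
    · push_neg at hle
      obtain ⟨p, hp, q, hq, hpq⟩ := Finset.one_lt_card.mp hle
      have hcp : (S.erase p).card ≤ n := by
        rw [Finset.card_erase_of_mem hp]; omega
      have hcq : (S.erase q).card ≤ n := by
        rw [Finset.card_erase_of_mem hq]; omega
      obtain ⟨vp, hvpF, hvp⟩ := ih (S.erase p) hcp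
        (fun r hr s hs => hpair r (Finset.mem_of_mem_erase hr) s (Finset.mem_of_mem_erase hs))
      obtain ⟨vq, hvqF, hvq⟩ := ih (S.erase q) hcq
        (fun r hr s hs => hpair r (Finset.mem_of_mem_erase hr) s (Finset.mem_of_mem_erase hs))
      obtain ⟨u, huF, hup, huq⟩ := hpair p hp q hq
      have hucons := hcons u huF
      refine ⟨fun x y => u (vq x y) (vp x y), hclosed u huF vq hvqF vp hvpF, ?_⟩
      intro r hr
      by_cases hrp : r = p
      · subst hrp
        have hvqr : DownOp r.1 r.2 vq := hvq r (Finset.mem_erase.mpr ⟨hpq, hp⟩)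
        have h1 : ∀ z, u r.2 z = r.2 → True := fun _ _ => trivial
        constructor
        · show u (vq r.1 r.2) (vp r.1 r.2) = r.2
          rw [hvqr.1]
          rcases hcons vp hvpF r.1 r.2 with h | h <;> rw [h]
          · exact hup.2
          · exact cons_diag hucons _
        · show u (vq r.2 r.1) (vp r.2 r.1) = r.2
          rw [hvqr.2]
          rcases hcons vp hvpF r.2 r.1 with h | h <;> rw [h]
          · exact cons_diag hucons _
          · exact hup.2
      · by_cases hrq : r = q
        · subst hrq
          have hvpr : DownOp r.1 r.2 vp := hvp r (Finset.mem_erase.mpr ⟨hrp, hq⟩)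
          constructor
          · show u (vq r.1 r.2) (vp r.1 r.2) = r.2
            rw [hvpr.1]
            rcases hcons vq hvqF r.1 r.2 with h | h <;> rw [h]
            · exact huq.1
            · exact cons_diag hucons _
          · show u (vq r.2 r.1) (vp r.2 r.1) = r.2
            rw [hvpr.2]
            rcases hcons vq hvqF r.2 r.1 with h | h <;> rw [h]
            · exact cons_diag hucons _
            · exact huq.1
        · have hvpr : DownOp r.1 r.2 vp := hvp r (Finset.mem_erase.mpr ⟨hrp, hr⟩)
          have hvqr : DownOp r.1 r.2 vq := hvq r (Finset.mem_erase.mpr ⟨hrq, hr⟩)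
          constructor
          · show u (vq r.1 r.2) (vp r.1 r.2) = r.2
            rw [hvqr.1, hvpr.1]; exact cons_diag hucons _
          · show u (vq r.2 r.1) (vp r.2 r.1) = r.2
            rw [hvqr.2, hvpr.2]; exact cons_diag hucons _

end Aux

/-- Existence of a weak tournament pair on `Com°(f_max) ∩ E(R)` under the
bipartiteness and local conditions. -/
theorem exists_weak_tournament_pair {A : Type*} [Fintype A]
    (R : Set (A → ℕ)) (hRfin : R.Finite)
    (hUG : ∀ a b : A, a ≠ b → (a, b) ∈ ER R ∨ (b, a) ∈ ER R)
    (F : Set (A → A → A)) (hcons : ∀ f ∈ F, Conservative2 f)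
    (hproj1 : (fun (x : A) (_ : A) => x) ∈ F)
    (hproj2 : (fun (_ : A) (y : A) => y) ∈ F)
    (hclosed : ∀ f ∈ F, ∀ g ∈ F, ∀ h ∈ F, (fun x y => f (g x y) (h x y)) ∈ F)
    (fmax : A → A → A) (hfmax : fmax ∈ F)
    (hmax : ∀ f ∈ F, Com f ⊆ Com fmax)
    (hbip : ∃ M₁ M₂ : Set (A × A),
      M₁ ∪ M₂ = {p : A × A | ({p.1, p.2} : Set A) ∈ Mset F} ∩ ER R ∧
      Disjoint M₁ M₂ ∧
      (∀ p ∈ M₁, ∀ q ∈ M₁, ∃ f ∈ F, DownOp p.1 p.2 f ∧ DownOp q.1 q.2 f) ∧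
      (∀ p ∈ M₂, ∀ q ∈ M₂, ∃ f ∈ F, DownOp p.1 p.2 f ∧ DownOp q.1 q.2 f))
    (hii : ∀ a b : A, a ≠ b → ({a, b} : Set A) ∈ Com fmax →
      (a, b) ∈ ER R → (b, a) ∈ ER R → ({a, b} : Set A) ∈ Mset F)
    (hiii : ∀ a b : A, (a, b) ∈ ER R → (b, a) ∉ ER R →
      ({a, b} : Set A) ∈ Com fmax → ({a, b} : Set A) ∉ Mset F →
      ∃ f ∈ F, DownOp a b f) :
    ∃ φ ∈ F, ∃ ψ ∈ F,
      WeakTournamentPair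
        ({p : A × A | ({p.1, p.2} : Set A) ∈ Com fmax} ∩ ER R) φ ψ := by
  classical
  obtain ⟨M₁, M₂, hunion, hdisj, hpart1, hpart2⟩ := hbip
  have hfmaxc : Conservative2 fmax := hcons fmax hfmax
  have hERne : ∀ {a b : A}, (a, b) ∈ ER R → a ≠ b := by
    rintro a b ⟨r, _, hlt⟩ rfl
    exact lt_irrefl _ hlt
  set S₃ : Set (A × A) :=
    {p | p ∈ ER R ∧ (p.2, p.1) ∉ ER R ∧ ({p.1, p.2} : Set A) ∈ Com fmax ∧
      ({p.1, p.2} : Set A) ∉ Mset F} with hS₃def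
  have hfmaxS₃ : ∀ p ∈ S₃, DownOp p.1 p.2 fmax := by
    rintro ⟨a, b⟩ ⟨hER, hNER, hCom, hM⟩
    have hab : a ≠ b := hERne hER
    have hcm : fmax a b = fmax b a := com_spec hab hCom
    obtain ⟨f, hfF, hfd⟩ := hiii a b hER hNER hCom hM
    rcases hfmaxc a b with h | h
    · exact absurd ⟨a, b, hab, rfl, f, hfF, fmax, hfmax, hfd.1.trans hfd.2.symm, hcm,
        by rw [hfd.1, h]; exact hab.symm⟩ hM
    · exact ⟨h, by rw [← hcm]; exact h⟩
  have hcommS₃ : ∀ p ∈ S₃, ∀ g ∈ F, g p.1 p.2 = g p.2 p.1 → g p.1 p.2 = p.2 := by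
    rintro ⟨a, b⟩ hp g hgF hgc
    have hab : a ≠ b := hERne hp.1
    have hd := hfmaxS₃ _ hp
    rcases hcons g hgF a b with h | h
    · exact absurd ⟨a, b, hab, rfl, fmax, hfmax, g, hgF, hd.1.trans hd.2.symm, hgc,
        by rw [hd.1, h]; exact hab.symm⟩ hp.2.2.2
    · exact h
  have key : ∀ (Mi : Set (A × A)),
      (∀ p ∈ Mi, ∀ q ∈ Mi, ∃ f ∈ F, DownOp p.1 p.2 f ∧ DownOp q.1 q.2 f) →
      ∃ w ∈ F, ∀ p ∈ Mi ∪ S₃, DownOp p.1 p.2 w := by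
    intro Mi hMi
    have hmix : ∀ p ∈ Mi, ∀ q ∈ S₃, ∃ f ∈ F, DownOp p.1 p.2 f ∧ DownOp q.1 q.2 f := by
      intro p hpMi q hqS₃
      obtain ⟨d, hdF, hdp, -⟩ := hMi p hpMi p hpMi
      have hdswap : (fun x y => d y x) ∈ F := hclosed d hdF _ hproj2 _ hproj1
      have htF : (fun x y => fmax (d x y) (d y x)) ∈ F :=
        hclosed fmax hfmax d hdF _ hdswap
      refine ⟨fun x y => fmax (d x y) (d y x), htF, ⟨?_, ?_⟩, ?_⟩
      · show fmax (d p.1 p.2) (d p.2 p.1) = p.2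
        rw [hdp.1, hdp.2]; exact cons_diag hfmaxc _
      · show fmax (d p.2 p.1) (d p.1 p.2) = p.2
        rw [hdp.1, hdp.2]; exact cons_diag hfmaxc _
      · obtain ⟨a, b⟩ := q
        have hab : a ≠ b := hERne hqS₃.1
        have hfd := hfmaxS₃ _ hqS₃
        rcases hcons d hdF a b with h1 | h1 <;> rcases hcons d hdF b a with h2 | h2
        · -- d a b = a, d b a = b
          exact ⟨by show fmax (d a b) (d b a) = b; rw [h1, h2]; exact hfd.1,
                 by show fmax (d b a) (d a b) = b; rw [h1, h2]; exact hfd.2⟩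
        · -- d a b = a, d b a = a : commutative with value a, contradiction
          have := hcommS₃ _ hqS₃ d hdF (h1.trans h2.symm)
          exact absurd (h1.symm.trans this) hab
        · -- d a b = b, d b a = b
          exact ⟨by show fmax (d a b) (d b a) = b; rw [h1, h2]; exact cons_diag hfmaxc b,
                 by show fmax (d b a) (d a b) = b; rw [h1, h2]; exact cons_diag hfmaxc b⟩
        · -- d a b = b, d b a = a
          exact ⟨by show fmax (d a b) (d b a) = b; rw [h1, h2]; exact hfd.2,
                 by show fmax (d b a) (d a b) = b; rw [h1, h2]; exact hfd.1⟩
    have hfin : (Mi ∪ S₃).Finite := Set.toFinite _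
    have hpair : ∀ p ∈ hfin.toFinset, ∀ q ∈ hfin.toFinset,
        ∃ f ∈ F, DownOp p.1 p.2 f ∧ DownOp q.1 q.2 f := by
      intro p hp q hq
      rw [Set.Finite.mem_toFinset] at hp hq
      rcases hp with hp | hp <;> rcases hq with hq | hq
      · exact hMi p hp q hq
      · exact hmix p hp q hq
      · obtain ⟨f, hfF, h1, h2⟩ := hmix q hq p hp
        exact ⟨f, hfF, h2, h1⟩
      · exact ⟨fmax, hfmax, hfmaxS₃ p hp, hfmaxS₃ q hq⟩
    obtain ⟨w, hwF, hw⟩ := glob_witness F hcons hproj1 hclosed hfin.toFinset.card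
      hfin.toFinset le_rfl hpair
    exact ⟨w, hwF, fun p hp => hw p (Set.Finite.mem_toFinset hfin |>.mpr hp)⟩
  obtain ⟨w₁, hw₁F, hw₁⟩ := key M₁ hpart1
  obtain ⟨w₂, hw₂F, hw₂⟩ := key M₂ hpart2
  have hw₁c : Conservative2 w₁ := hcons w₁ hw₁F
  have hw₂c : Conservative2 w₂ := hcons w₂ hw₂F
  -- memberships
  have memswap : ∀ f ∈ F, (fun x y => f y x) ∈ F := fun f hf =>
    hclosed f hf _ hproj2 _ hproj1
  have memhat : ∀ f ∈ F, hatf f ∈ F := fun f hf => hclosed f hf f hf _ hproj1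
  have memtil : ∀ f ∈ F, tilf f ∈ F := fun f hf => hclosed f hf _ hproj2 f hf
  have memD : ∀ f ∈ F, ∀ g ∈ F, Dop f g ∈ F := fun f hf g hg =>
    hclosed f hf g hg _ (memswap g hg)
  have memA : ∀ f ∈ F, ∀ g ∈ F, stepA f g ∈ F := fun f hf g hg =>
    memhat _ (memD f hf g hg)
  have memB : ∀ f ∈ F, ∀ g ∈ F, stepB f g ∈ F := fun f hf g hg =>
    memtil _ (memD f hf g hg)
  have hφ3F : hatf fmax ∈ F := memhat fmax hfmax
  have hψ3F : tilf fmax ∈ F := memtil fmax hfmax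
  have hφ2F : stepA (hatf fmax) w₂ ∈ F := memA _ hφ3F _ hw₂F
  have hψ2F : stepB (tilf fmax) w₁ ∈ F := memB _ hψ3F _ hw₁F
  set φ : A → A → A := stepA (stepA (hatf fmax) w₂) w₁ with hφdef
  set ψ : A → A → A := stepB (stepB (tilf fmax) w₁) w₂ with hψdef
  have hφF : φ ∈ F := memA _ hφ2F _ hw₁F
  have hψF : ψ ∈ F := memB _ hψ2F _ hw₂F
  have hφ3c : Conservative2 (hatf fmax) := hcons _ hφ3F
  have hψ3c : Conservative2 (tilf fmax) := hcons _ hψ3F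
  have hφ2c : Conservative2 (stepA (hatf fmax) w₂) := hcons _ hφ2F
  have hψ2c : Conservative2 (stepB (tilf fmax) w₁) := hcons _ hψ2F
  have hφc : Conservative2 φ := hcons _ hφF
  have hψc : Conservative2 ψ := hcons _ hψF
  -- behavior from w₁ / w₂ being down
  have hφ_of_w₁ : ∀ {a b : A}, DownOp a b w₁ → DownOp a b φ := by
    intro a b hd
    have hc : w₁ a b = w₁ b a := hd.1.trans hd.2.symm
    have := stepA_comm_g hφ2c hw₁c hc
    exact ⟨this.1.trans hd.1, this.2.trans hd.1⟩
  have hψ_of_w₂ : ∀ {a b : A}, DownOp a b w₂ → DownOp a b ψ := by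
    intro a b hd
    have hc : w₂ a b = w₂ b a := hd.1.trans hd.2.symm
    have := stepB_comm_g hψ2c hw₂c hc
    exact ⟨this.1.trans hd.1, this.2.trans hd.1⟩
  refine ⟨φ, hφF, ψ, hψF, ?_, ?_, ?_⟩
  · -- symmetric case
    intro a b habO hbaO
    obtain ⟨hcomab, hERab⟩ := habO
    obtain ⟨hcomba, hERba⟩ := hbaO
    have hab : a ≠ b := hERne hERab
    have hM : ({a, b} : Set A) ∈ Mset F := hii a b hab hcomab hERab hERba
    have h1 : (a, b) ∈ M₁ ∪ M₂ := by rw [hunion]; exact ⟨hM, hERab⟩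
    have h2 : (b, a) ∈ M₁ ∪ M₂ := by
      rw [hunion]
      exact ⟨show ({b, a} : Set A) ∈ Mset F from Set.pair_comm a b ▸ hM, hERba⟩
    rcases h1 with h1 | h1 <;> rcases h2 with h2 | h2
    · obtain ⟨f, -, hfd1, hfd2⟩ := hpart1 _ h1 _ h2
      exact absurd (hfd1.1.symm.trans hfd2.2) hab.symm
    · left
      constructor
      · exact hφ_of_w₁ (hw₁ _ (Or.inl h1))
      · have hd : DownOp b a w₂ := hw₂ _ (Or.inl h2)
        have := hψ_of_w₂ hd
        exact ⟨this.2, this.1⟩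
    · right
      constructor
      · have hd : DownOp b a w₁ := hw₁ _ (Or.inl h2)
        have := hφ_of_w₁ hd
        exact ⟨this.2, this.1⟩
      · exact hψ_of_w₂ (hw₂ _ (Or.inl h1))
    · obtain ⟨f, -, hfd1, hfd2⟩ := hpart2 _ h1 _ h2
      exact absurd (hfd1.1.symm.trans hfd2.2) hab.symm
  · -- asymmetric case
    intro a b habO hbaO
    obtain ⟨hcom, hER⟩ := habO
    have hab : a ≠ b := hERne hER
    have hNba : (b, a) ∉ ER R := fun hc =>
      hbaO ⟨show ({b, a} : Set A) ∈ Com fmax from Set.pair_comm a b ▸ hcom, hc⟩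
    by_cases hM : ({a, b} : Set A) ∈ Mset F
    · have h1 : (a, b) ∈ M₁ ∪ M₂ := by rw [hunion]; exact ⟨hM, hER⟩
      rcases h1 with h1 | h1
      · -- (a,b) ∈ M₁ : φ is down
        have hd1 : DownOp a b w₁ := hw₁ _ (Or.inl h1)
        have hφd : DownOp a b φ := hφ_of_w₁ hd1
        by_cases hc2 : w₂ a b = w₂ b a
        · have hs := stepB_comm_g hψ2c hw₂c hc2
          rcases hw₂c a b with hv | hv
          · exact Or.inl ⟨hφd, ⟨hs.1.trans hv, hs.2.trans hv⟩⟩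
          · exact Or.inr (Or.inr ⟨hφd, ⟨hs.1.trans hv, hs.2.trans hv⟩⟩)
        · have hc1 : w₁ a b = w₁ b a := hd1.1.trans hd1.2.symm
          have hψ2v := stepB_comm_g hψ3c hw₁c hc1
          have hψ2comm : stepB (tilf fmax) w₁ a b = stepB (tilf fmax) w₁ b a :=
            hψ2v.1.trans hψ2v.2.symm
          have hs := stepB_noncomm_g hψ2c hw₂c hc2 hψ2comm
          have hval : stepB (tilf fmax) w₁ a b = b := hψ2v.1.trans hd1.1
          exact Or.inr (Or.inr ⟨hφd, ⟨hs.1.trans hval, hs.2.trans hval⟩⟩)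
      · -- (a,b) ∈ M₂ : ψ is down
        have hd2 : DownOp a b w₂ := hw₂ _ (Or.inl h1)
        have hψd : DownOp a b ψ := hψ_of_w₂ hd2
        by_cases hc1 : w₁ a b = w₁ b a
        · have hs := stepA_comm_g hφ2c hw₁c hc1
          rcases hw₁c a b with hv | hv
          · exact Or.inr (Or.inl ⟨⟨hs.1.trans hv, hs.2.trans hv⟩, hψd⟩)
          · exact Or.inr (Or.inr ⟨⟨hs.1.trans hv, hs.2.trans hv⟩, hψd⟩)
        · have hc2 : w₂ a b = w₂ b a := hd2.1.trans hd2.2.symm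
          have hφ2v := stepA_comm_g hφ3c hw₂c hc2
          have hφ2comm : stepA (hatf fmax) w₂ a b = stepA (hatf fmax) w₂ b a :=
            hφ2v.1.trans hφ2v.2.symm
          have hs := stepA_noncomm_g hφ2c hw₁c hc1 hφ2comm
          have hval : stepA (hatf fmax) w₂ a b = b := hφ2v.1.trans hd2.1
          exact Or.inr (Or.inr ⟨⟨hs.1.trans hval, hs.2.trans hval⟩, hψd⟩)
    · -- S₃ case
      have hq : (a, b) ∈ S₃ := ⟨hER, hNba, hcom, hM⟩
      exact Or.inr (Or.inr ⟨hφ_of_w₁ (hw₁ _ (Or.inr hq)), hψ_of_w₂ (hw₂ _ (Or.inr hq))⟩)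
  · -- non-edge case
    intro a b hab hnab hnba
    have hncom : ({a, b} : Set A) ∉ Com fmax := by
      intro hc
      rcases hUG a b hab with h | h
      · exact hnab ⟨hc, h⟩
      · exact hnba ⟨show ({b, a} : Set A) ∈ Com fmax from Set.pair_comm a b ▸ hc, h⟩
    have hfn : fmax a b ≠ fmax b a := fun hc => hncom ⟨a, b, hab, rfl, hc⟩
    have h1n : w₁ a b ≠ w₁ b a := fun hc => hncom (hmax w₁ hw₁F ⟨a, b, hab, rfl, hc⟩)
    have h2n : w₂ a b ≠ w₂ b a := fun hc => hncom (hmax w₂ hw₂F ⟨a, b, hab, rfl, hc⟩)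
    have hhat := hat_noncomm hfmaxc hfn
    have hφ3n : hatf fmax a b ≠ hatf fmax b a := by rw [hhat.1, hhat.2]; exact hab
    have hφ2v := stepA_noncomm2 hφ3c hw₂c h2n hφ3n
    have hφ2n : stepA (hatf fmax) w₂ a b ≠ stepA (hatf fmax) w₂ b a := by
      rw [hφ2v.1, hφ2v.2]; exact hab
    have hφv := stepA_noncomm2 hφ2c hw₁c h1n hφ2n
    have htil := til_noncomm hfmaxc hfn
    have hψ3n : tilf fmax a b ≠ tilf fmax b a := by rw [htil.1, htil.2]; exact hab.symm
    have hψ2v := stepB_noncomm2 hψ3c hw₁c h1n hψ3n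
    have hψ2n : stepB (tilf fmax) w₁ a b ≠ stepB (tilf fmax) w₁ b a := by
      rw [hψ2v.1, hψ2v.2]; exact hab.symm
    have hψv := stepB_noncomm2 hψ2c hw₂c h2n hψ2n
    intro x hx y hy
    have hx' : x = a ∨ x = b := by simpa using hx
    have hy' : y = a ∨ y = b := by simpa using hy
    rcases hx' with rfl | rfl <;> rcases hy' with rfl | rfl
    · exact ⟨cons_diag hφc _, cons_diag hψc _⟩
    · exact ⟨hφv.1, hψv.1⟩
    · exact ⟨hφv.2, hψv.2⟩
    · exact ⟨cons_diag hφc _, cons_diag hψc _⟩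
end

section
/- Let A be a finite set, R a finite set of functions A → ℕ such that UG(R) is complete, S° ⊆ A × A a symmetric set (i.e., (a, b) ∈ S° iff (b, a) ∈ S°) with a ≠ b whenever (a, b) ∈ S°, and let (φ, ψ) be a weak tournament pair on O = S° ∩ E(R). Then: (i) for every r ∈ R and all a, b ∈ A, r(φ a b) + r(ψ a b) ≤ r a + r b; and consequently (ii) for every finite set V, weights w : V → R → ℕ, and functions f, g : V → A, defining M(f) = Σ_{v ∈ V} Σ_{r ∈ R} w v r · r(f v) and the pointwise operations φ(f,g)(v) = φ (f v) (g v), ψ(f,g)(v) = ψ (f v) (g v), one has M(φ(f,g)) + M(ψ(f,g)) ≤ M(f) + M(g). -/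
/-!
On two distinct points `a, b` the operations either swap or fix the pair, which leaves
`r a + r b` unchanged, or both return `b`. The latter happens only when `(a, b) ∈ O` but
`(b, a) ∉ O`; as `S` is symmetric, `(b, a) ∉ E(R)`, so no `r ∈ R` prefers `b` to `a` and
`2 r b ≤ r a + r b`. Summing with nonnegative weights gives the inequality for the measure.
-/

section Pair

variable {A : Type*} {r : A → ℕ} {φ ψ : A → A → A} {a b : A}

def MultimorphismOnPair (r : A → ℕ) (φ ψ : A → A → A) (a b : A) : Prop :=
  r (φ a b) + r (ψ a b) ≤ r a + r b ∧ r (φ b a) + r (ψ b a) ≤ r b + r a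

theorem MultimorphismOnPair.symm (h : MultimorphismOnPair r φ ψ a b) :
    MultimorphismOnPair r φ ψ b a :=
  And.symm h

theorem upOp_iff_downOp_swap (f : A → A → A) : UpOp a b f ↔ DownOp b a f :=
  and_comm

theorem multimorphismOnPair_self (hφ : Conservative2 φ) (hψ : Conservative2 ψ) :
    MultimorphismOnPair r φ ψ a a := by
  have h : r (φ a a) + r (ψ a a) ≤ r a + r a := by
    rcases hφ a a with h | h <;> rcases hψ a a with h' | h' <;> simp [h, h']
  exact ⟨h, h⟩

theorem multimorphismOnPair_of_projections (hab : φ a b = a ∧ ψ a b = b)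
    (hba : φ b a = b ∧ ψ b a = a) : MultimorphismOnPair r φ ψ a b := by
  simp [MultimorphismOnPair, hab, hba]

theorem multimorphismOnPair_of_downOp_upOp (hφ : DownOp a b φ) (hψ : UpOp a b ψ) :
    MultimorphismOnPair r φ ψ a b := by
  simp only [MultimorphismOnPair, hφ.1, hφ.2, hψ.1, hψ.2]
  omega

theorem multimorphismOnPair_of_upOp_downOp (hφ : UpOp a b φ) (hψ : DownOp a b ψ) :
    MultimorphismOnPair r φ ψ a b :=
  (multimorphismOnPair_of_downOp_upOp ((upOp_iff_downOp_swap φ).1 hφ)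
    ((upOp_iff_downOp_swap ψ).2 hψ)).symm

theorem multimorphismOnPair_of_downOp_downOp (hφ : DownOp a b φ) (hψ : DownOp a b ψ)
    (hr : r b ≤ r a) : MultimorphismOnPair r φ ψ a b := by
  simp only [MultimorphismOnPair, hφ.1, hφ.2, hψ.1, hψ.2]
  omega

end Pair

theorem WeakTournamentPair.multimorphismOnPair {A : Type*} {O : Set (A × A)}
    {φ ψ : A → A → A} (h : WeakTournamentPair O φ ψ) (r : A → ℕ) (hφ : Conservative2 φ)
    (hψ : Conservative2 ψ) (hr : ∀ a b, (a, b) ∈ O → (b, a) ∉ O → r b ≤ r a) (a b : A) :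
    MultimorphismOnPair r φ ψ a b := by
  obtain ⟨hboth, hone, hnone⟩ := h
  rcases eq_or_ne a b with rfl | hne
  · exact multimorphismOnPair_self hφ hψ
  have of_one_way : ∀ x y, (x, y) ∈ O → (y, x) ∉ O → MultimorphismOnPair r φ ψ x y := by
    intro x y hxy hyx
    rcases hone x y hxy hyx with ⟨hφ', hψ'⟩ | ⟨hφ', hψ'⟩ | ⟨hφ', hψ'⟩
    · exact multimorphismOnPair_of_downOp_upOp hφ' hψ'
    · exact multimorphismOnPair_of_upOp_downOp hφ' hψ'
    · exact multimorphismOnPair_of_downOp_downOp hφ' hψ' (hr x y hxy hyx)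
  by_cases hab : (a, b) ∈ O <;> by_cases hba : (b, a) ∈ O
  · rcases hboth a b hab hba with ⟨hφ', hψ'⟩ | ⟨hφ', hψ'⟩
    · exact multimorphismOnPair_of_downOp_upOp hφ' hψ'
    · exact multimorphismOnPair_of_upOp_downOp hφ' hψ'
  · exact of_one_way a b hab hba
  · exact (of_one_way b a hba hab).symm
  · have hproj := hnone a b hne hab hba
    exact multimorphismOnPair_of_projections (hproj a (by simp) b (by simp))
      (hproj b (by simp) a (by simp))

theorem le_of_mem_inter_ER_of_not_mem {A : Type*} {S : Set (A × A)}
    (hS : ∀ a b, (a, b) ∈ S → (b, a) ∈ S) {R : Set (A → ℕ)} {r : A → ℕ} (hr : r ∈ R)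
    {a b : A} (hab : (a, b) ∈ S ∩ ER R) (hba : (b, a) ∉ S ∩ ER R) : r b ≤ r a :=
  not_lt.1 fun hlt => hba ⟨hS a b hab.1, r, hr, hlt⟩

theorem weighted_sum_add_le_of_pointwise {A V : Type*} [Fintype V] (R : Finset (A → ℕ))
    {φ ψ : A → A → A} (h : ∀ r ∈ R, ∀ a b, r (φ a b) + r (ψ a b) ≤ r a + r b)
    (w : V → (A → ℕ) → ℕ) (f g : V → A) :
    (∑ v, ∑ r ∈ R, w v r * r (φ (f v) (g v))) + (∑ v, ∑ r ∈ R, w v r * r (ψ (f v) (g v))) ≤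
      (∑ v, ∑ r ∈ R, w v r * r (f v)) + (∑ v, ∑ r ∈ R, w v r * r (g v)) := by
  simp only [← Finset.sum_add_distrib, ← mul_add]
  exact Finset.sum_le_sum fun v _ => Finset.sum_le_sum fun r hr =>
    Nat.mul_le_mul_left _ (h r hr (f v) (g v))

theorem weak_tournament_pair_multimorphism_general {A : Type*}
    (R : Finset (A → ℕ))
    (S : Set (A × A))
    (hSsymm : ∀ a b : A, (a, b) ∈ S → (b, a) ∈ S)
    (φ ψ : A → A → A) (hφ : Conservative2 φ) (hψ : Conservative2 ψ)
    (hwtp : WeakTournamentPair (S ∩ ER (↑R : Set (A → ℕ))) φ ψ) :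
    (∀ r ∈ R, ∀ a b : A, r (φ a b) + r (ψ a b) ≤ r a + r b) ∧
    (∀ (V : Type) [Fintype V], ∀ (w : V → (A → ℕ) → ℕ) (f g : V → A),
      (∑ v : V, ∑ r ∈ R, w v r * r (φ (f v) (g v))) +
        (∑ v : V, ∑ r ∈ R, w v r * r (ψ (f v) (g v))) ≤
      (∑ v : V, ∑ r ∈ R, w v r * r (f v)) +
        (∑ v : V, ∑ r ∈ R, w v r * r (g v))) := by
  have pointwise : ∀ r ∈ R, ∀ a b : A, r (φ a b) + r (ψ a b) ≤ r a + r b := fun r hr a b =>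
    (hwtp.multimorphismOnPair r hφ hψ
      (fun _ _ => le_of_mem_inter_ER_of_not_mem hSsymm (Finset.mem_coe.2 hr)) a b).1
  exact ⟨pointwise, fun V _ w f g => weighted_sum_add_le_of_pointwise R pointwise w f g⟩

/-- A weak tournament pair on `S° ∩ E(R)` is a multimorphism of every measure:
pointwise `r (φ a b) + r (ψ a b) ≤ r a + r b` for `r ∈ R`, and consequently
`M (φ(f,g)) + M (ψ(f,g)) ≤ M f + M g` for every weighted measure `M`. -/
theorem weak_tournament_pair_multimorphism {A : Type*} [Fintype A] [DecidableEq A]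
    (R : Finset (A → ℕ))
    (hUG : ∀ a b : A, a ≠ b →
      (a, b) ∈ ER (↑R : Set (A → ℕ)) ∨ (b, a) ∈ ER (↑R : Set (A → ℕ)))
    (S : Set (A × A))
    (hSsymm : ∀ a b : A, (a, b) ∈ S → (b, a) ∈ S)
    (hSirr : ∀ a b : A, (a, b) ∈ S → a ≠ b)
    (φ ψ : A → A → A) (hφ : Conservative2 φ) (hψ : Conservative2 ψ)
    (hwtp : WeakTournamentPair (S ∩ ER (↑R : Set (A → ℕ))) φ ψ) :
    (∀ r ∈ R, ∀ a b : A, r (φ a b) + r (ψ a b) ≤ r a + r b) ∧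
    (∀ (V : Type) [Fintype V], ∀ (w : V → (A → ℕ) → ℕ) (f g : V → A),
      (∑ v : V, ∑ r ∈ R, w v r * r (φ (f v) (g v))) +
        (∑ v : V, ∑ r ∈ R, w v r * r (ψ (f v) (g v))) ≤
      (∑ v : V, ∑ r ∈ R, w v r * r (f v)) +
        (∑ v : V, ∑ r ∈ R, w v r * r (g v))) :=
  weak_tournament_pair_multimorphism_general R S hSsymm φ ψ hφ hψ hwtp
end

section
/- Let A and V be finite sets, φ, ψ binary operations on A, and S a set of functions V → A closed under the pointwise operations: for all f, g ∈ S, the functions v ↦ φ (f v) (g v) and v ↦ ψ (f v) (g v) belong to S. Let M : (V → A) → ℕ satisfy M(φ(f,g)) + M(ψ(f,g)) ≤ M(f) + M(g) for all f, g ∈ S, where φ(f,g)(v) = φ (f v) (g v) and ψ(f,g)(v) = ψ (f v) (g v). Let v ∈ V and a, b ∈ A be such that φ a b = φ b a = b and ψ a b = ψ b a = b, and suppose there exist f ∈ S with f v = a and g ∈ S with g v = b. Then min { M(f) : f ∈ S, f v = b } ≤ min { M(f) : f ∈ S, f v = a }. -/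
open Set

/-- Applied to a minimiser `y` of `M` on `s`, the hypothesis gives `2 · min ≤ M x + min`. -/
theorem Nat.sInf_image_le_of_forall_exists_add_le {X : Type*} {s : Set X} {M : X → ℕ} {x : X}
    (h : ∀ y ∈ s, ∃ p ∈ s, ∃ q ∈ s, M p + M q ≤ M x + M y) :
    sInf (M '' s) ≤ M x := by
  rcases s.eq_empty_or_nonempty with rfl | hs
  · simp
  obtain ⟨y, hy, hy_min⟩ := Nat.sInf_mem (hs.image M)
  obtain ⟨p, hp, q, hq, hpq⟩ := h y hy
  have hp_min := Nat.sInf_le (mem_image_of_mem M hp)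
  have hq_min := Nat.sInf_le (mem_image_of_mem M hq)
  omega

theorem setOf_exists_mem_and_eq_and_eq {X Y : Type*} (S : Set (X → Y)) (M : (X → Y) → ℕ)
    (v : X) (b : Y) :
    {k : ℕ | ∃ f ∈ S, f v = b ∧ M f = k} = M '' {f | f ∈ S ∧ f v = b} := by
  ext k
  simp [and_assoc]

theorem pruning_lemma_general {A V : Type*}
    (φ ψ : A → A → A) (S : Set (V → A))
    (hclosed : ∀ f ∈ S, ∀ g ∈ S,
      (fun v => φ (f v) (g v)) ∈ S ∧ (fun v => ψ (f v) (g v)) ∈ S)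
    (M : (V → A) → ℕ)
    (hM : ∀ f ∈ S, ∀ g ∈ S,
      M (fun v => φ (f v) (g v)) + M (fun v => ψ (f v) (g v)) ≤ M f + M g)
    (v : V) (a b : A)
    (hφab : φ a b = b ∧ φ b a = b) (hψab : ψ a b = b ∧ ψ b a = b)
    (ha : ∃ f ∈ S, f v = a) :
    sInf {k : ℕ | ∃ f ∈ S, f v = b ∧ M f = k} ≤
      sInf {k : ℕ | ∃ f ∈ S, f v = a ∧ M f = k} := by
  rw [setOf_exists_mem_and_eq_and_eq, setOf_exists_mem_and_eq_and_eq]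
  obtain ⟨f₀, hf₀, hf₀v⟩ := ha
  refine le_csInf ⟨M f₀, mem_image_of_mem M ⟨hf₀, hf₀v⟩⟩ ?_
  rintro _ ⟨f, ⟨hf, hfv⟩, rfl⟩
  refine Nat.sInf_image_le_of_forall_exists_add_le fun g ⟨hg, hgv⟩ => ?_
  exact ⟨_, ⟨(hclosed f hf g hg).1, by simp [hfv, hgv, hφab.1]⟩,
    _, ⟨(hclosed f hf g hg).2, by simp [hfv, hgv, hψab.1]⟩, hM f hf g hg⟩

/-- The pruning lemma: if `φ` and `ψ` both send the pair `{a, b}` to `b`, the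
solution set `S` is closed under the pointwise operations, and the measure `M`
satisfies the multimorphism inequality on `S`, then the minimum of `M` over
solutions with value `b` at `v` is at most the minimum over solutions with
value `a` at `v`. -/
theorem pruning_lemma {A V : Type*} [Fintype A] [Fintype V]
    (φ ψ : A → A → A) (S : Set (V → A))
    (hclosed : ∀ f ∈ S, ∀ g ∈ S,
      (fun v => φ (f v) (g v)) ∈ S ∧ (fun v => ψ (f v) (g v)) ∈ S)
    (M : (V → A) → ℕ)
    (hM : ∀ f ∈ S, ∀ g ∈ S,
      M (fun v => φ (f v) (g v)) + M (fun v => ψ (f v) (g v)) ≤ M f + M g)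
    (v : V) (a b : A)
    (hφab : φ a b = b ∧ φ b a = b) (hψab : ψ a b = b ∧ ψ b a = b)
    (ha : ∃ f ∈ S, f v = a) (hb : ∃ g ∈ S, g v = b) :
    sInf {k : ℕ | ∃ f ∈ S, f v = b ∧ M f = k} ≤
      sInf {k : ℕ | ∃ f ∈ S, f v = a ∧ M f = k} :=
  pruning_lemma_general φ ψ S hclosed M hM v a b hφab hψab ha
end
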